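/- Let N be a quasi-binary tree-child time consistent hybridization network and let i, j be two leaves of N. Then i and j are siblings if, and only if, L_N(i,j) = 2, where L_N(i,j) is the sum of the distances from the least common semi-strict ancestor [i,j] to i and to j. -/

import Mathlib

open Classical

/-- A walk (path) in a digraph: a nonempty list of vertices with consecutive arcs. -/
def IsWalk {V : Type} (E : V → V → Prop) (p : List V) : Prop := p ≠ [] ∧ p.Chain' E

/-- A path with origin `u` and end `v`. -/
def WalkFromTo {V : Type} (E : V → V → Prop) (u v : V) (p : List V) : Prop :=
  IsWalk E p ∧ p.head? = some u ∧ p.getLast? = some v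

/-- `v` is a descendant of `u` (possibly trivial path from `u` to `v`). -/
def Desc {V : Type} (E : V → V → Prop) (u v : V) : Prop := Relation.ReflTransGen E u v

/-- A root: a node with no incoming arcs. -/
def IsRootNode {V : Type} (E : V → V → Prop) (r : V) : Prop := ∀ u, ¬ E u r

/-- `u` is a strict ancestor of `v`: `v` is a descendant of `u` and every path
from a root to `v` contains `u`. -/
def StrictAnc {V : Type} (E : V → V → Prop) (u v : V) : Prop :=
  Desc E u v ∧ ∀ (r : V) (p : List V), IsRootNode E r → WalkFromTo E r v p → u ∈ p

/-- In-degree. -/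
noncomputable def indeg {V : Type} (E : V → V → Prop) (v : V) : ℕ := {u | E u v}.ncard
/-- Out-degree. -/
noncomputable def outdeg {V : Type} (E : V → V → Prop) (v : V) : ℕ := {w | E v w}.ncard

/-- Tree node: in-degree at most 1. -/
def IsTreeNode {V : Type} (E : V → V → Prop) (v : V) : Prop := indeg E v ≤ 1
/-- Hybrid node: in-degree at least 2. -/
def IsHybrid {V : Type} (E : V → V → Prop) (v : V) : Prop := 2 ≤ indeg E v
/-- Leaf: no outgoing arcs. -/
def IsLeaf {V : Type} (E : V → V → Prop) (v : V) : Prop := ∀ w, ¬ E v w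

/-- Acyclicity: no non-trivial path from a node to itself. -/
def Acyclic {V : Type} (E : V → V → Prop) : Prop := ∀ v, ¬ Relation.TransGen E v v

/-- A hybridization network: a rooted DAG whose single root has out-degree > 1. -/
structure IsHybNet {V : Type} (E : V → V → Prop) (r : V) : Prop where
  acyclic : Acyclic E
  isRoot : IsRootNode E r
  uniqueRoot : ∀ x, IsRootNode E x → x = r
  rootOut : 2 ≤ outdeg E r

/-- Tree-child condition: every internal node has a tree-node child. -/
def TreeChild {V : Type} (E : V → V → Prop) : Prop :=
  ∀ v, ¬ IsLeaf E v → ∃ w, E v w ∧ IsTreeNode E w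

/-- Time consistency: a temporal representation exists. -/
def TimeConsistent {V : Type} (E : V → V → Prop) : Prop :=
  ∃ τ : V → ℕ, ∀ u v, E u v → (IsTreeNode E v → τ u < τ v) ∧ (IsHybrid E v → τ u = τ v)

/-- The leaves are bijectively labeled by `S` via `leaf`. -/
def LabelsLeaves {V S : Type} (E : V → V → Prop) (leaf : S → V) : Prop :=
  Function.Injective leaf ∧ (∀ s, IsLeaf E (leaf s)) ∧ ∀ v, IsLeaf E v → ∃ s, leaf s = v

/-- Distance: length of a shortest path from `u` to `v`. -/
noncomputable def dist {V : Type} (E : V → V → Prop) (u v : V) : ℕ :=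
  sInf {n | ∃ p, WalkFromTo E u v p ∧ p.length = n + 1}

/-- Height: largest length of a path from `v` to a leaf. -/
noncomputable def height {V : Type} (E : V → V → Prop) (v : V) : ℕ :=
  sSup {n | ∃ p w, WalkFromTo E v w p ∧ IsLeaf E w ∧ p.length = n + 1}

/-- Common ancestors of `u` and `v` that are strict ancestors of at least one of them. -/
def NetCSA {V : Type} (E : V → V → Prop) (u v : V) : Set V :=
  {x | Desc E x u ∧ Desc E x v ∧ (StrictAnc E x u ∨ StrictAnc E x v)}

/-- `x` is a least common semi-strict ancestor of `u` and `v`. -/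
def IsLCSA {V : Type} (E : V → V → Prop) (u v x : V) : Prop :=
  x ∈ NetCSA E u v ∧ ∀ y ∈ NetCSA E u v, height E x ≤ height E y

/-- The least common semi-strict ancestor `[u,v]` (the root `r` witnesses nonemptiness). -/
noncomputable def lcsa {V : Type} (E : V → V → Prop) (r u v : V) : V :=
  @Classical.epsilon V ⟨r⟩ (IsLCSA E u v)

/-- `ℓ_N(u,v)`: the distance from `[u,v]` to `u`. -/
noncomputable def ell {V : Type} (E : V → V → Prop) (r u v : V) : ℕ :=
  dist E (lcsa E r u v) u

/-- `L_N(u,v) = ℓ_N(u,v) + ℓ_N(v,u)`: the LCSA-path length between `u` and `v`. -/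
noncomputable def pathLen {V : Type} (E : V → V → Prop) (r u v : V) : ℕ :=
  ell E r u v + ell E r v u

/-- `h_N(u,v)`: −1 if `[u,v]` is a strict ancestor of `u` only, 1 if of `v` only, 0 if of both. -/
noncomputable def hval {V : Type} (E : V → V → Prop) (r u v : V) : ℤ :=
  if StrictAnc E (lcsa E r u v) u then
    (if StrictAnc E (lcsa E r u v) v then 0 else -1)
  else 1

/-- Siblings: distinct nodes sharing a parent. -/
def Sibling {V : Type} (E : V → V → Prop) (u v : V) : Prop :=
  u ≠ v ∧ ∃ p, E p u ∧ E p v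

/-- A tree path: a non-trivial path whose end and intermediate nodes are tree nodes. -/
def TreePath {V : Type} (E : V → V → Prop) (p : List V) (u v : V) : Prop :=
  WalkFromTo E u v p ∧ 2 ≤ p.length ∧ ∀ w ∈ p.tail, IsTreeNode E w

/-- `v` is a tree descendant of `u`. -/
def TreeDesc {V : Type} (E : V → V → Prop) (u v : V) : Prop := ∃ p, TreePath E p u v

/-- Quasi-binary hybridization network. -/
def QuasiBinary {V : Type} (E : V → V → Prop) : Prop :=
  ∀ v : V, (indeg E v, outdeg E v) ∈ ({(0,2),(1,0),(1,2),(2,0),(2,1),(2,2)} : Set (ℕ × ℕ))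

/-- Fully resolved hybridization network node types. -/
def FullyResolvedHyb {V : Type} (E : V → V → Prop) : Prop :=
  ∀ v : V, (indeg E v, outdeg E v) ∈ ({(0,2),(1,0),(1,2),(2,0),(2,2)} : Set (ℕ × ℕ))

/-- Fully resolved phylogenetic network node types. -/
def FullyResolvedPhylo {V : Type} (E : V → V → Prop) : Prop :=
  ∀ v : V, (indeg E v, outdeg E v) ∈ ({(0,2),(1,0),(1,2),(2,1)} : Set (ℕ × ℕ))

/-- Phylogenetic network condition: every hybrid node has exactly one child, a tree node. -/
def PhyloNet {V : Type} (E : V → V → Prop) : Prop :=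
  ∀ v, IsHybrid E v → ∃ w, E v w ∧ IsTreeNode E w ∧ ∀ x, E v x → x = w

/-!
Since `NetCSA E i j` is symmetric in `i` and `j`, so is `IsLCSA`, hence `[i,j] = [j,i] =: x` and
`L(i,j) = d(x,i) + d(x,j)`. Both distances are at least `1` because `x` is a common ancestor of two
distinct leaves, so `L(i,j) = 2` exactly when `x` is a parent of both `i` and `j`.
Conversely, if `i` and `j` have a common parent `p`, quasi-binarity makes them the only children of
`p` and tree-childness makes one of them a tree node, of which `p` is then a strict ancestor. So
`p ∈ CSA(i,j)` has height `1`, and the minimal-height element `x` has height at most `1`, which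
forces it to be a parent of both leaves.
-/

section Walks

variable {V : Type} {E : V → V → Prop} {u v : V} {p : List V}

theorem WalkFromTo.length_pos (hp : WalkFromTo E u v p) : 0 < p.length :=
  List.length_pos_iff.mpr hp.1.1

theorem WalkFromTo.getElem_zero (hp : WalkFromTo E u v p) : p[0]'hp.length_pos = u :=
  (List.getElem?_eq_some_iff.mp (List.head?_eq_getElem? ▸ hp.2.1)).2

theorem WalkFromTo.getElem_length_sub_one (hp : WalkFromTo E u v p) :
    p[p.length - 1]'(Nat.sub_one_lt_of_lt hp.length_pos) = v :=
  (List.getElem?_eq_some_iff.mp (List.getLast?_eq_getElem? ▸ hp.2.2)).2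

theorem WalkFromTo.head_mem (hp : WalkFromTo E u v p) : u ∈ p := by
  rw [← hp.getElem_zero]
  exact List.getElem_mem _

theorem exists_walkFromTo_of_desc (h : Desc E u v) : ∃ p, WalkFromTo E u v p := by
  obtain ⟨l, hchain, hlast⟩ := List.exists_isChain_cons_of_relationReflTransGen h
  refine ⟨u :: l, ⟨List.cons_ne_nil _ _, hchain⟩, rfl, ?_⟩
  rw [List.getLast?_eq_some_getLast (List.cons_ne_nil u l), hlast]

theorem WalkFromTo.eq_of_length_eq_one (hp : WalkFromTo E u v p) (h : p.length = 1) : u = v := by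
  have hv := hp.getElem_length_sub_one
  simp only [h, Nat.sub_self] at hv
  exact hp.getElem_zero.symm.trans hv

theorem WalkFromTo.adj_of_length_eq_two (hp : WalkFromTo E u v p) (h : p.length = 2) : E u v := by
  obtain ⟨a, b, rfl⟩ := List.length_eq_two.mp h
  obtain ⟨⟨-, hchain⟩, ha, hb⟩ := hp
  simp only [List.head?_cons, List.getLast?_cons_cons, List.getLast?_singleton,
    Option.some_inj] at ha hb
  exact ha ▸ hb ▸ List.isChain_pair.mp hchain

theorem WalkFromTo.exists_mem_adj (hp : WalkFromTo E u v p) (huv : u ≠ v) : ∃ w ∈ p, E w v := by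
  have hlen : 2 ≤ p.length := by
    by_contra! h
    exact huv (hp.eq_of_length_eq_one (by have := hp.length_pos; omega))
  refine ⟨p[p.length - 2], List.getElem_mem _, ?_⟩
  rw [← hp.getElem_length_sub_one]
  convert hp.1.2.getElem (p.length - 2) (by omega) using 2
  omega

theorem WalkFromTo.nodup (hac : Acyclic E) (hp : WalkFromTo E u v p) : p.Nodup :=
  (hp.1.2.imp fun _ _ => Relation.TransGen.single).pairwise.imp
    fun hab => by rintro rfl; exact hac _ hab

theorem eq_of_isLeaf_of_desc (hu : IsLeaf E u) (h : Desc E u v) : v = u := by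
  rcases h.cases_head with rfl | ⟨w, huw, -⟩
  · rfl
  · exact absurd huw (hu w)

end Walks

section Distance

variable {V : Type} {E : V → V → Prop} {u v : V}

theorem exists_walkFromTo_length_eq_dist (h : Desc E u v) :
    ∃ p, WalkFromTo E u v p ∧ p.length = dist E u v + 1 := by
  obtain ⟨p, hp⟩ := exists_walkFromTo_of_desc h
  exact Nat.sInf_mem (s := {n | ∃ p, WalkFromTo E u v p ∧ p.length = n + 1})
    ⟨p.length - 1, p, hp, by have := hp.length_pos; omega⟩

theorem one_le_dist (huv : u ≠ v) (h : Desc E u v) : 1 ≤ dist E u v := by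
  obtain ⟨p, hp, hlen⟩ := exists_walkFromTo_length_eq_dist h
  by_contra! h0
  exact huv (hp.eq_of_length_eq_one (by omega))

theorem dist_eq_one_of_adj (huv : u ≠ v) (h : E u v) : dist E u v = 1 :=
  le_antisymm
    (Nat.sInf_le ⟨[u, v], ⟨⟨by simp, List.isChain_pair.mpr h⟩, rfl, rfl⟩, rfl⟩)
    (one_le_dist huv (.single h))

theorem adj_of_dist_eq_one (h : Desc E u v) (hd : dist E u v = 1) : E u v := by
  obtain ⟨p, hp, hlen⟩ := exists_walkFromTo_length_eq_dist h
  exact hp.adj_of_length_eq_two (by omega)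

end Distance

section Height

variable {V : Type} {E : V → V → Prop} {u v : V}

theorem le_height [Finite V] (hac : Acyclic E) {p : List V} (hp : WalkFromTo E u v p)
    (hv : IsLeaf E v) {n : ℕ} (hn : p.length = n + 1) : n ≤ height E u := by
  refine le_csSup ⟨Nat.card V, ?_⟩ ⟨p, v, hp, hv, hn⟩
  rintro m ⟨q, w, hq, -, hm⟩
  have := (hq.nodup hac).length_le_natCard
  omega

theorem dist_le_height [Finite V] (hac : Acyclic E) (h : Desc E u v) (hv : IsLeaf E v) :
    dist E u v ≤ height E u :=
  have ⟨_, hp, hlen⟩ := exists_walkFromTo_length_eq_dist h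
  le_height hac hp hv hlen

theorem adj_of_height_le_one [Finite V] (hac : Acyclic E) (huv : u ≠ v) (h : Desc E u v)
    (hv : IsLeaf E v) (hu : height E u ≤ 1) : E u v :=
  adj_of_dist_eq_one h (le_antisymm ((dist_le_height hac h hv).trans hu) (one_le_dist huv h))

theorem height_le_one_of_forall_adj_isLeaf (h : ∀ w, E u w → IsLeaf E w) : height E u ≤ 1 := by
  refine csSup_le' ?_
  rintro n ⟨p, w, hp, -, hn⟩
  by_contra! h2
  have hchain := hp.1.2
  exact h _ (hp.getElem_zero ▸ hchain.getElem 0 (by omega)) _ (hchain.getElem 1 (by omega))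

end Height

section Network

variable {V : Type} {E : V → V → Prop} {r u v : V}

theorem desc_of_isHybNet [Finite V] (hnet : IsHybNet E r) (v : V) : Desc E r v := by
  have : Std.Irrefl (Relation.TransGen E) := ⟨hnet.acyclic⟩
  induction v using (Finite.wellFounded_of_trans_of_irrefl (Relation.TransGen E)).induction with
  | _ v ih =>
    by_cases hv : IsRootNode E v
    · exact hnet.uniqueRoot v hv ▸ .refl
    · obtain ⟨w, hwv⟩ : ∃ w, E w v := by simpa [IsRootNode] using hv
      exact (ih w (.single hwv)).tail hwv

theorem root_mem_netCSA [Finite V] (hnet : IsHybNet E r) : r ∈ NetCSA E u v :=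
  ⟨desc_of_isHybNet hnet u, desc_of_isHybNet hnet v, .inl ⟨desc_of_isHybNet hnet u,
    fun _ _ hr' hp => hnet.uniqueRoot _ hr' ▸ hp.head_mem⟩⟩

theorem isLCSA_lcsa [Finite V] (hnet : IsHybNet E r) : IsLCSA E u v (lcsa E r u v) :=
  Classical.epsilon_spec (p := IsLCSA E u v)
    ⟨_, Function.argminOn_mem (height E) _ ⟨r, root_mem_netCSA hnet⟩,
      fun _ hy => Function.argminOn_le (height E) _ hy⟩

theorem netCSA_comm (u v : V) : NetCSA E u v = NetCSA E v u := by
  ext x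
  exact ⟨fun ⟨hu, hv, hs⟩ => ⟨hv, hu, hs.symm⟩, fun ⟨hv, hu, hs⟩ => ⟨hu, hv, hs.symm⟩⟩

theorem lcsa_comm (r u v : V) : lcsa E r u v = lcsa E r v u := by
  unfold lcsa
  congr 1
  funext x
  rw [IsLCSA, IsLCSA, netCSA_comm]

theorem lcsa_ne_left [Finite V] (hnet : IsHybNet E r) (hu : IsLeaf E u) (huv : u ≠ v) :
    lcsa E r u v ≠ u := fun h =>
  huv (eq_of_isLeaf_of_desc hu (h ▸ (isLCSA_lcsa hnet).1.2.1)).symm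

theorem lcsa_ne_right [Finite V] (hnet : IsHybNet E r) (hv : IsLeaf E v) (huv : u ≠ v) :
    lcsa E r u v ≠ v :=
  lcsa_comm r u v ▸ lcsa_ne_left hnet hv huv.symm

theorem eq_of_adj_of_isTreeNode [Finite V] {w w' : V} (hv : IsTreeNode E v) (hw : E w v)
    (hw' : E w' v) : w = w' :=
  (Set.ncard_le_one (Set.toFinite _)).mp hv w hw w' hw'

theorem strictAnc_of_adj_of_isTreeNode [Finite V] (huv : E u v) (hv : IsTreeNode E v) :
    StrictAnc E u v := by
  refine ⟨.single huv, fun r' p hr' hp => ?_⟩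
  obtain ⟨w, hwp, hwv⟩ := hp.exists_mem_adj fun h => hr' u (h ▸ huv)
  exact eq_of_adj_of_isTreeNode hv hwv huv ▸ hwp

theorem eq_or_eq_of_adj_of_quasiBinary [Finite V] (hqb : QuasiBinary E) {a b c : V}
    (ha : E v a) (hb : E v b) (hab : a ≠ b) (hc : E v c) : c = a ∨ c = b := by
  have houtdeg : outdeg E v ≤ 2 := by
    have := hqb v
    simp only [Set.mem_insert_iff, Set.mem_singleton_iff, Prod.mk.injEq] at this
    omega
  by_contra! h
  exact houtdeg.not_gt
    ((Set.two_lt_ncard (Set.toFinite _)).mpr ⟨a, ha, b, hb, c, hc, hab, h.1.symm, h.2.symm⟩)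

theorem pathLen_eq_two_iff [Finite V] (hnet : IsHybNet E r) (hu : IsLeaf E u) (hv : IsLeaf E v)
    (huv : u ≠ v) : pathLen E r u v = 2 ↔ E (lcsa E r u v) u ∧ E (lcsa E r u v) v := by
  have hxu := lcsa_ne_left hnet hu huv
  have hxv := lcsa_ne_right hnet hv huv
  obtain ⟨hdu, hdv, -⟩ := (isLCSA_lcsa (r := r) hnet).1
  have hdist : pathLen E r u v = dist E (lcsa E r u v) u + dist E (lcsa E r u v) v := by
    rw [pathLen, ell, ell, lcsa_comm r v u]
  have hdu1 := one_le_dist hxu hdu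
  have hdv1 := one_le_dist hxv hdv
  refine ⟨fun h => ⟨adj_of_dist_eq_one hdu (by omega), adj_of_dist_eq_one hdv (by omega)⟩,
    fun ⟨heu, hev⟩ => ?_⟩
  rw [hdist, dist_eq_one_of_adj hxu heu, dist_eq_one_of_adj hxv hev]

theorem height_lcsa_le_one_of_sibling [Finite V] (hnet : IsHybNet E r) (hqb : QuasiBinary E)
    (htc : TreeChild E) (hu : IsLeaf E u) (hv : IsLeaf E v) (hs : Sibling E u v) :
    height E (lcsa E r u v) ≤ 1 := by
  obtain ⟨huv, p, hpu, hpv⟩ := hs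
  have hchildren : ∀ c, E p c → c = u ∨ c = v :=
    fun _ => eq_or_eq_of_adj_of_quasiBinary hqb hpu hpv huv
  obtain ⟨w, hpw, hw⟩ := htc p fun h => h u hpu
  have hp : p ∈ NetCSA E u v := by
    refine ⟨.single hpu, .single hpv, ?_⟩
    rcases hchildren w hpw with rfl | rfl
    exacts [.inl (strictAnc_of_adj_of_isTreeNode hpu hw),
      .inr (strictAnc_of_adj_of_isTreeNode hpv hw)]
  have hheight : height E p ≤ 1 := height_le_one_of_forall_adj_isLeaf fun c hc => by
    rcases hchildren c hc with rfl | rfl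
    exacts [hu, hv]
  exact ((isLCSA_lcsa hnet).2 p hp).trans hheight

end Network

theorem stmt8_general {V : Type} [Fintype V] (E : V → V → Prop) (r : V)
    (hnet : IsHybNet E r) (hqb : QuasiBinary E)
    (htc : TreeChild E)
    (i j : V) (hi : IsLeaf E i) (hj : IsLeaf E j) (hij : i ≠ j) :
    Sibling E i j ↔ pathLen E r i j = 2 := by
  rw [pathLen_eq_two_iff hnet hi hj hij]
  refine ⟨fun hs => ?_, fun ⟨hxi, hxj⟩ => ⟨hij, _, hxi, hxj⟩⟩
  have hx := height_lcsa_le_one_of_sibling hnet hqb htc hi hj hs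
  obtain ⟨hdi, hdj, -⟩ := (isLCSA_lcsa (r := r) hnet).1
  exact ⟨adj_of_height_le_one hnet.acyclic (lcsa_ne_left hnet hi hij) hdi hi hx,
    adj_of_height_le_one hnet.acyclic (lcsa_ne_right hnet hj hij) hdj hj hx⟩

/-- In a quasi-binary TCTC hybridization network, two leaves are siblings
iff their LCSA-path length is 2. -/
theorem stmt8 {V : Type} [Fintype V] (E : V → V → Prop) (r : V)
    (hnet : IsHybNet E r) (hqb : QuasiBinary E)
    (htc : TreeChild E) (hti : TimeConsistent E)
    (i j : V) (hi : IsLeaf E i) (hj : IsLeaf E j) (hij : i ≠ j) :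
    Sibling E i j ↔ pathLen E r i j = 2 :=
  stmt8_general E r hnet hqb htc i j hi hj hij
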